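/- Let U ⊆ ℝ^d be an open convex set and ξ : ℝ^d → ℝ ∪ {+∞} a convex function that is finite and differentiable on U, with Bregman divergence D(x, y) = ξ(x) − ξ(y) − ⟨∇ξ(y), x − y⟩ for x ∈ dom ξ, y ∈ U. Let γ ≥ 0 and let h : ℝ^d → ℝ ∪ {+∞} be a proper convex function such that h − γξ is convex on U (i.e. h is γ-strongly convex relative to ξ). Let b ∈ ℝ^d, σ > 0, ȳ ∈ U, and suppose y⁺ ∈ U is a minimizer over ℝ^d of y ↦ h(y) − ⟨b, y⟩ + σ^{-1} D(y, ȳ). Then for every y ∈ U ∩ dom h it holds D(y, ȳ) − D(y⁺, ȳ) − (1 + γσ) D(y, y⁺) ≥ σ ( h(y⁺) − h(y) + ⟨b, y − y⁺⟩ ). -/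

import Mathlib

open scoped RealInnerProductSpace

/-!
Split the objective as `ψ + φ` with `ψ = h - γ ξ` convex on `U` and
`φ = (γ + σ⁻¹) ξ - ⟪b + σ⁻¹ ∇ξ(ȳ), ·⟫` differentiable. Comparing `y⁺` with the points of the
segment `[y⁺, y]` and letting them tend to `y⁺` gives the first-order condition
`ψ y⁺ ≤ ψ y + ⟪∇φ(y⁺), y - y⁺⟫`. The three-point identity
`D y ȳ - D y⁺ ȳ - D y y⁺ = ⟪∇ξ(y⁺) - ∇ξ(ȳ), y - y⁺⟫` turns this into the claim; the extra
`γ σ D y y⁺` comes from the term `-γ ξ` in `ψ`.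
-/

open Set Filter Topology

theorem HasFDerivAt.le_apply_of_eventually_mul_le_sub {F : Type*} [NormedAddCommGroup F]
    [NormedSpace ℝ F] {f : F → ℝ} {f' : F →L[ℝ] ℝ} {x v : F} {c : ℝ} (hf : HasFDerivAt f f' x)
    (h : ∀ᶠ t in 𝓝[>] (0 : ℝ), t * c ≤ f (x + t • v) - f x) : c ≤ f' v := by
  have hline : HasDerivAt (fun t : ℝ => f (x + t • v)) (f' v) 0 := by
    have hf₀ : HasFDerivAt f f' (x + (0 : ℝ) • v) := by simpa using hf
    have hline₀ : HasDerivAt (fun t : ℝ => x + t • v) v 0 := by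
      simpa using ((hasDerivAt_id (0 : ℝ)).smul_const v).const_add x
    exact hf₀.comp_hasDerivAt 0 hline₀
  have hslope := (hasDerivAt_iff_tendsto_slope.mp hline).mono_left (nhdsGT_le_nhdsNE 0)
  refine ge_of_tendsto hslope ?_
  filter_upwards [h, self_mem_nhdsWithin] with t ht (ht₀ : 0 < t)
  rw [slope_def_field, le_div_iff₀ (by simpa using ht₀)]
  simpa [mul_comm] using ht

theorem ConvexOn.le_add_apply_sub_of_isMinOn_add {F : Type*} [NormedAddCommGroup F]
    [NormedSpace ℝ F] {s : Set F} {ψ φ : F → ℝ} {φ' : F →L[ℝ] ℝ} {x y : F}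
    (hψ : ConvexOn ℝ s ψ) (hφ : HasFDerivAt φ φ' x) (hmin : IsMinOn (ψ + φ) s x)
    (hx : x ∈ s) (hy : y ∈ s) : ψ x ≤ ψ y + φ' (y - x) := by
  suffices ψ x - ψ y ≤ φ' (y - x) by linarith
  refine hφ.le_apply_of_eventually_mul_le_sub ?_
  filter_upwards [Ioo_mem_nhdsGT one_pos] with t ⟨ht₀, ht₁⟩
  have hxt : (1 - t) • x + t • y = x + t • (y - x) := by module
  have hmin_t : ψ x + φ x ≤ ψ (x + t • (y - x)) + φ (x + t • (y - x)) :=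
    hmin (hψ.1.add_smul_sub_mem hx hy ⟨ht₀.le, ht₁.le⟩)
  have hconv := hψ.2 hx hy (sub_nonneg.mpr ht₁.le) ht₀.le (sub_add_cancel 1 t)
  rw [hxt, smul_eq_mul, smul_eq_mul] at hconv
  linarith

section Bregman

variable {E : Type*} [NormedAddCommGroup E] [InnerProductSpace ℝ E]

def bregmanDiv (ξ : E → ℝ) (g : E → E) (x y : E) : ℝ := ξ x - ξ y - ⟪g y, x - y⟫

theorem bregmanDiv_sub_bregmanDiv_sub_bregmanDiv (ξ : E → ℝ) (g : E → E) (x y z : E) :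
    bregmanDiv ξ g x z - bregmanDiv ξ g y z - bregmanDiv ξ g x y = ⟪g y - g z, x - y⟫ := by
  have hsplit : x - z = (x - y) + (y - z) := by abel
  simp only [bregmanDiv, hsplit, inner_add_right, inner_sub_left]
  ring

end Bregman

theorem three_point_relative_strong_convexity_general
    (d : ℕ) (U domξ domh : Set (EuclideanSpace ℝ (Fin d)))
    (ξ h : EuclideanSpace ℝ (Fin d) → ℝ)
    (g : EuclideanSpace ℝ (Fin d) → EuclideanSpace ℝ (Fin d))
    (hUconv : Convex ℝ U) (hUsub : U ⊆ domξ)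
    (hgrad : ∀ y ∈ U, HasGradientAt ξ (g y) y)
    (D : EuclideanSpace ℝ (Fin d) → EuclideanSpace ℝ (Fin d) → ℝ)
    (hD : ∀ x y, D x y = ξ x - ξ y - ⟪g y, x - y⟫)
    (γ : ℝ)
    (hh : ConvexOn ℝ domh h)
    (hrel : ConvexOn ℝ U (fun y => h y - γ * ξ y))
    (b : EuclideanSpace ℝ (Fin d)) (σ : ℝ) (hσ : 0 < σ)
    (yb yp : EuclideanSpace ℝ (Fin d)) (hyp : yp ∈ U)
    (hyph : yp ∈ domh)
    (hmin : ∀ y ∈ domh ∩ domξ,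
      h yp - ⟪b, yp⟫ + σ⁻¹ * D yp yb ≤ h y - ⟪b, y⟫ + σ⁻¹ * D y yb) :
    ∀ y ∈ U ∩ domh,
      σ * (h yp - h y + ⟪b, y - yp⟫) ≤
        D y yb - D yp yb - (1 + γ * σ) * D y yp := by
  rintro y ⟨hyU, hyh⟩
  obtain rfl : D = bregmanDiv ξ g := by ext x z; exact hD x z
  set ψ := fun z => h z - γ * ξ z
  set φ := fun z => (γ + σ⁻¹) * ξ z - ⟪b + σ⁻¹ • g yb, z⟫
  have hφ : HasFDerivAt φ ((γ + σ⁻¹) • InnerProductSpace.toDual ℝ _ (g yp)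
      - innerSL ℝ (b + σ⁻¹ • g yb)) yp :=
    ((hgrad yp hyp).hasFDerivAt.const_mul _).sub (innerSL ℝ _).hasFDerivAt
  have hobj : ∀ z, h z - ⟪b, z⟫ + σ⁻¹ * bregmanDiv ξ g z yb
      = (ψ + φ) z + σ⁻¹ * (⟪g yb, yb⟫ - ξ yb) := fun z => by
    simp only [bregmanDiv, ψ, φ, Pi.add_apply, inner_sub_right, inner_add_left,
      real_inner_smul_left]
    ring
  have hψφ : IsMinOn (ψ + φ) (U ∩ domh) yp := fun z hz => by
    have := hmin z ⟨hz.2, hUsub hz.1⟩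
    rw [hobj, hobj] at this
    exact le_of_add_le_add_right this
  have hopt := (hrel.subset inter_subset_left (hUconv.inter hh.1)).le_add_apply_sub_of_isMinOn_add
    hφ hψφ ⟨hyp, hyph⟩ ⟨hyU, hyh⟩
  simp only [ψ, FunLike.coe_sub, FunLike.coe_smul, Pi.sub_apply,
    Pi.smul_apply, InnerProductSpace.toDual_apply_apply, innerSL_apply_apply, smul_eq_mul,
    inner_add_left, real_inner_smul_left] at hopt
  calc σ * (h yp - h y + ⟪b, y - yp⟫)
      ≤ ⟪g yp - g yb, y - yp⟫ - γ * σ * bregmanDiv ξ g y yp := by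
        have hσopt := mul_le_mul_of_nonneg_left hopt hσ.le
        simp only [bregmanDiv, inner_sub_left]
        field_simp at hσopt ⊢
        linarith
    _ = _ := by rw [← bregmanDiv_sub_bregmanDiv_sub_bregmanDiv ξ g y yp yb]; ring

/-- **Strengthened three-point inequality under relative strong convexity.**
If `h` is `γ`-strongly convex relative to `ξ` on `U` (i.e. `h − γξ` is convex on
`U`) and `y⁺ ∈ U` minimizes `y ↦ h y − ⟪b, y⟫ + σ⁻¹ D y ȳ`, then for every
`y ∈ U ∩ dom h`:
`D y ȳ − D y⁺ ȳ − (1 + γσ) D y y⁺ ≥ σ (h y⁺ − h y + ⟪b, y − y⁺⟫)`. -/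
theorem three_point_relative_strong_convexity
    (d : ℕ) (U domξ domh : Set (EuclideanSpace ℝ (Fin d)))
    (ξ h : EuclideanSpace ℝ (Fin d) → ℝ)
    (g : EuclideanSpace ℝ (Fin d) → EuclideanSpace ℝ (Fin d))
    (hUopen : IsOpen U) (hUconv : Convex ℝ U) (hUsub : U ⊆ domξ)
    (hξ : ConvexOn ℝ domξ ξ)
    (hgrad : ∀ y ∈ U, HasGradientAt ξ (g y) y)
    (D : EuclideanSpace ℝ (Fin d) → EuclideanSpace ℝ (Fin d) → ℝ)
    (hD : ∀ x y, D x y = ξ x - ξ y - ⟪g y, x - y⟫)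
    (γ : ℝ) (hγ : 0 ≤ γ)
    (hhne : domh.Nonempty) (hh : ConvexOn ℝ domh h)
    (hrel : ConvexOn ℝ U (fun y => h y - γ * ξ y))
    (b : EuclideanSpace ℝ (Fin d)) (σ : ℝ) (hσ : 0 < σ)
    (yb yp : EuclideanSpace ℝ (Fin d)) (hyb : yb ∈ U) (hyp : yp ∈ U)
    (hyph : yp ∈ domh)
    (hmin : ∀ y ∈ domh ∩ domξ,
      h yp - ⟪b, yp⟫ + σ⁻¹ * D yp yb ≤ h y - ⟪b, y⟫ + σ⁻¹ * D y yb) :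
    ∀ y ∈ U ∩ domh,
      σ * (h yp - h y + ⟪b, y - yp⟫) ≤
        D y yb - D yp yb - (1 + γ * σ) * D y yp :=
  three_point_relative_strong_convexity_general d U domξ domh ξ h g hUconv hUsub hgrad D hD γ hh
    hrel b σ hσ yb yp hyp hyph hmin
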